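/- Uniform lower bound of the dissipation functional for mollified speeds: let ℓ > 0, let f : ℝ → [0,∞) be continuous and ℓ-periodic with f(s) > 0 for Lebesgue-almost every s, let ε̄ ∈ (0,ℓ] and δ ∈ (0,1), and let N ≥ 1 with ā_N := (1/3)(2N+1)/(2N−1), c̄_N := (2N−1)/(4N). Let η : ℝ → [0,∞) be smooth, supported in [−1,1], with ∫η = 1, and set η_ε(x) := η(x/ε)/ε. Then there exists ε₀ > 0 such that for every ε ∈ (0,ε₀], defining c := δ c̄_N (f * η_ε), every interval I ⊂ ℝ with ε̄ ≤ |I| ≤ ℓ satisfies ā_N ∫_I c(s) f(s) (c̄_N f(s) − c(s)) ds ≥ ½ δ(1−δ) ā_N c̄_N² ∫_I f(s)³ ds. -/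

import Mathlib

open MeasureTheory intervalIntegral

/-- `ā_N = (1/3)(2N+1)/(2N-1)`. -/
noncomputable def dissipA (N : ℕ) : ℝ := (1 / 3) * (2 * (N : ℝ) + 1) / (2 * (N : ℝ) - 1)

/-- `c̄_N = (2N-1)/(4N)`. -/
noncomputable def dissipC (N : ℕ) : ℝ := (2 * (N : ℝ) - 1) / (4 * (N : ℝ))

/-- Mollification `(f * η_ε)(s) = ∫ f(s-y) η(y/ε)/ε dy`. -/
noncomputable def mollify (f η : ℝ → ℝ) (ε s : ℝ) : ℝ := ∫ y, f (s - y) * (η (y / ε) / ε)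

/-- A continuous periodic function admits a uniform modulus of continuity. -/
lemma periodic_uc (f : ℝ → ℝ) (hfc : Continuous f) {ℓ : ℝ} (hℓ : 0 < ℓ)
    (hfper : Function.Periodic f ℓ) {κ : ℝ} (hκ : 0 < κ) :
    ∃ ε₁ > 0, ∀ s y : ℝ, |y| ≤ ε₁ → |f (s - y) - f s| ≤ κ := by
  have huc : UniformContinuousOn f (Set.Icc (-ℓ) (2 * ℓ)) :=
    isCompact_Icc.uniformContinuousOn_of_continuous hfc.continuousOn
  rw [Metric.uniformContinuousOn_iff] at huc
  obtain ⟨d, hd0, hd⟩ := huc κ hκ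
  refine ⟨min (d / 2) ℓ, lt_min (by linarith) hℓ, ?_⟩
  intro s y hy
  have hyℓ : |y| ≤ ℓ := le_trans hy (min_le_right _ _)
  have hyd : |y| < d := lt_of_le_of_lt (le_trans hy (min_le_left _ _)) (by linarith)
  obtain ⟨hy1, hy2⟩ := abs_le.mp hyℓ
  have h1 : ((⌊s / ℓ⌋ : ℝ)) ≤ s / ℓ := Int.floor_le _
  have h2 : s / ℓ < (⌊s / ℓ⌋ : ℝ) + 1 := Int.lt_floor_add_one _
  have h1' : (⌊s / ℓ⌋ : ℝ) * ℓ ≤ s := by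
    calc (⌊s / ℓ⌋ : ℝ) * ℓ ≤ (s / ℓ) * ℓ := mul_le_mul_of_nonneg_right h1 hℓ.le
    _ = s := div_mul_cancel₀ s hℓ.ne'
  have h2' : s < ((⌊s / ℓ⌋ : ℝ) + 1) * ℓ := by
    calc s = (s / ℓ) * ℓ := (div_mul_cancel₀ s hℓ.ne').symm
    _ < _ := mul_lt_mul_of_pos_right h2 hℓ
  set t : ℝ := s - (⌊s / ℓ⌋ : ℝ) * ℓ with htdef
  have htmem : t ∈ Set.Icc (-ℓ) (2 * ℓ) := by
    constructor <;> simp only [htdef] <;> linarith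
  have htymem : t - y ∈ Set.Icc (-ℓ) (2 * ℓ) := by
    constructor <;> simp only [htdef] <;> linarith
  have hft : f t = f s := by
    rw [htdef]; exact hfper.sub_int_mul_eq ⌊s / ℓ⌋
  have hfty : f (t - y) = f (s - y) := by
    have ht2 : t - y = (s - y) - (⌊s / ℓ⌋ : ℝ) * ℓ := by rw [htdef]; ring
    rw [ht2]; exact hfper.sub_int_mul_eq ⌊s / ℓ⌋
  have hdist := hd (t - y) htymem t htmem
    (by rw [Real.dist_eq, sub_sub_cancel_left, abs_neg]; exact hyd)
  rw [Real.dist_eq, hfty, hft] at hdist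
  exact hdist.le

/-- Positivity of `∫ f³` on nontrivial intervals, when `f ≥ 0` is continuous
and a.e. positive. -/
lemma interval_pos (f : ℝ → ℝ) (hfc : Continuous f) (hf0 : ∀ s, 0 ≤ f s)
    (hfpos : ∀ᵐ s ∂(volume : Measure ℝ), 0 < f s) {a b : ℝ} (hab : a < b) :
    0 < ∫ s in a..b, f s ^ 3 := by
  rw [intervalIntegral.integral_of_le hab.le]
  rw [MeasureTheory.setIntegral_pos_iff_support_of_nonneg_ae
    (Filter.Eventually.of_forall fun s => pow_nonneg (hf0 s) 3) ((hfc.pow 3).integrableOn_Ioc)]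
  have hnull : volume {s : ℝ | ¬ 0 < f s} = 0 := by
    rw [← MeasureTheory.ae_iff]; exact hfpos
  have hle : volume (Set.Ioc a b) ≤
      volume (Function.support (fun s => f s ^ 3) ∩ Set.Ioc a b) +
        volume {s : ℝ | ¬ 0 < f s} := by
    refine le_trans (measure_mono ?_) (measure_union_le _ _)
    intro x hx
    by_cases h : 0 < f x
    · exact Or.inl ⟨by simp only [Function.mem_support]; exact pow_ne_zero 3 (ne_of_gt h), hx⟩
    · exact Or.inr h
  rw [hnull, add_zero] at hle
  calc (0 : ENNReal) < volume (Set.Ioc a b) := by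
        rw [Real.volume_Ioc]; exact ENNReal.ofReal_pos.mpr (sub_pos.mpr hab)
    _ ≤ _ := hle

open Convolution in
/-- Continuity of the mollification together with the uniform closeness estimate. -/
lemma mollify_props (f η : ℝ → ℝ) (hfc : Continuous f)
    (hηc : Continuous η) (hηsupp : ∀ x, x ∉ Set.Icc (-1 : ℝ) 1 → η x = 0)
    (hη0 : ∀ x, 0 ≤ η x) (hη1 : (∫ x, η x) = 1)
    {ε : ℝ} (hε : 0 < ε) {κ : ℝ} (hκ0 : 0 ≤ κ)
    (hf_uc : ∀ s y : ℝ, |y| ≤ ε → |f (s - y) - f s| ≤ κ) :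
    Continuous (mollify f η ε) ∧ ∀ s, |mollify f η ε s - f s| ≤ κ := by
  set k : ℝ → ℝ := fun y => η (y / ε) / ε with hkdef
  have hkc : Continuous k := (hηc.comp (continuous_id.div_const ε)).div_const ε
  have hk0 : ∀ y, 0 ≤ k y := fun y => div_nonneg (hη0 _) hε.le
  have hksupp : ∀ y ∉ Set.Icc (-ε) ε, k y = 0 := by
    intro y hy
    have hyε : y / ε ∉ Set.Icc (-1 : ℝ) 1 := by
      simp only [Set.mem_Icc, not_and_or, not_le] at hy ⊢
      rcases hy with h | h
      · exact Or.inl ((div_lt_iff₀ hε).mpr (by linarith))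
      · exact Or.inr ((lt_div_iff₀ hε).mpr (by linarith))
    simp only [hkdef, hηsupp _ hyε, zero_div]
  have hkcs : HasCompactSupport k := HasCompactSupport.intro isCompact_Icc hksupp
  have hkint : Integrable k := hkc.integrable_of_hasCompactSupport hkcs
  have hkI : (∫ y, k y) = 1 := by
    simp only [hkdef]
    rw [MeasureTheory.integral_div, MeasureTheory.Measure.integral_comp_div η ε, hη1,
      abs_of_pos hε, smul_eq_mul, mul_one, div_self hε.ne']
  have hmoll : ∀ s, mollify f η ε s = ∫ y, f (s - y) * k y := by
    intro s; simp only [mollify, hkdef]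
  have hshift : ∀ s : ℝ, Integrable (fun y => f (s - y) * k y) := by
    intro s
    exact ((hfc.comp (continuous_const.sub continuous_id)).mul hkc).integrable_of_hasCompactSupport
      hkcs.mul_left
  constructor
  · have heq : mollify f η ε = convolution f k (ContinuousLinearMap.mul ℝ ℝ) volume := by
      funext s
      rw [hmoll s, convolution_def]
      simp only [ContinuousLinearMap.mul_apply']
      rw [← MeasureTheory.integral_sub_left_eq_self (fun u => f u * k (s - u)) volume s]
      simp only [sub_sub_cancel]
    rw [heq]
    exact hkcs.continuous_convolution_right _ hfc.locallyIntegrable hkc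
  · intro s
    have heq2 : mollify f η ε s - f s = ∫ y, (f (s - y) - f s) * k y := by
      have h3 : (∫ y, (f (s - y) - f s) * k y)
          = (∫ y, f (s - y) * k y) - ∫ y, f s * k y := by
        rw [← MeasureTheory.integral_sub (hshift s) (hkint.const_mul (f s))]
        congr 1; funext y; ring
      rw [hmoll s, h3, MeasureTheory.integral_const_mul, hkI, mul_one]
    rw [heq2]
    calc |∫ y, (f (s - y) - f s) * k y| ≤ ∫ y, |f (s - y) - f s| * |k y| := by
          simpa [Real.norm_eq_abs, abs_mul] using
            norm_integral_le_integral_norm (μ := volume) (fun y => (f (s - y) - f s) * k y)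
      _ ≤ ∫ y, κ * k y := by
          apply integral_mono_of_nonneg
          · exact Filter.Eventually.of_forall fun y =>
              mul_nonneg (abs_nonneg _) (abs_nonneg _)
          · exact hkint.const_mul κ
          · refine Filter.Eventually.of_forall fun y => ?_
            show |f (s - y) - f s| * |k y| ≤ κ * k y
            rw [abs_of_nonneg (hk0 y)]
            rcases eq_or_ne (k y) 0 with h | h
            · simp [h]
            · have hy : y ∈ Set.Icc (-ε) ε := by
                by_contra hy; exact h (hksupp y hy)
              exact mul_le_mul_of_nonneg_right (hf_uc s y (abs_le.mpr ⟨hy.1, hy.2⟩)) (hk0 y)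
      _ = κ := by rw [MeasureTheory.integral_const_mul, hkI, mul_one]

set_option maxHeartbeats 1000000 in
/-- Uniform lower bound of the dissipation functional for mollified speeds:
with `c := δ c̄_N (f * η_ε)`, for all sufficiently small `ε > 0` and every
interval `I` with `ε̄ ≤ |I| ≤ ℓ`,
`ā_N ∫_I c f (c̄_N f - c) ≥ ½ δ(1-δ) ā_N c̄_N² ∫_I f³`. -/
theorem stmt_7 (ℓ : ℝ) (hℓ : 0 < ℓ) (f : ℝ → ℝ) (hfc : Continuous f)
    (hfper : Function.Periodic f ℓ) (hf0 : ∀ s, 0 ≤ f s)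
    (hfpos : ∀ᵐ s ∂volume, 0 < f s)
    (ε' : ℝ) (hε'0 : 0 < ε') (hε'ℓ : ε' ≤ ℓ)
    (δ : ℝ) (hδ0 : 0 < δ) (hδ1 : δ < 1)
    (N : ℕ) (hN : 1 ≤ N)
    (η : ℝ → ℝ) (hηsm : ContDiff ℝ (⊤ : ℕ∞) η)
    (hηsupp : ∀ x, x ∉ Set.Icc (-1 : ℝ) 1 → η x = 0)
    (hη0 : ∀ x, 0 ≤ η x) (hη1 : (∫ x, η x) = 1) :
    ∃ ε₀ > 0, ∀ ε : ℝ, 0 < ε → ε ≤ ε₀ →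
      ∀ a b : ℝ, ε' ≤ b - a → b - a ≤ ℓ →
        (1 / 2) * δ * (1 - δ) * dissipA N * dissipC N ^ 2 * (∫ s in a..b, f s ^ 3) ≤
          dissipA N * ∫ s in a..b,
            (δ * dissipC N * mollify f η ε s) * f s *
              (dissipC N * f s - δ * dissipC N * mollify f η ε s) := by
  have hN' : (1 : ℝ) ≤ (N : ℝ) := by exact_mod_cast hN
  have hA : 0 ≤ dissipA N := by
    unfold dissipA
    apply div_nonneg (by positivity) (by linarith)
  have hC : 0 ≤ dissipC N := by
    unfold dissipC
    apply div_nonneg (by linarith) (by linarith)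
  -- bound M for f
  obtain ⟨x₀, hx₀, hmax⟩ :=
    isCompact_Icc.exists_isMaxOn (Set.nonempty_Icc.mpr hℓ.le) (hfc.continuousOn (s := Set.Icc 0 ℓ))
  set M : ℝ := f x₀ with hMdef
  have hM : ∀ s, f s ≤ M := by
    intro s
    obtain ⟨y, hy, hyeq⟩ := hfper.exists_mem_Ico₀ hℓ s
    rw [hyeq]
    exact hmax ⟨hy.1, hy.2.le⟩
  have hM0 : 0 ≤ M := hf0 x₀
  have hMM : 0 ≤ M ^ 2 + M := add_nonneg (sq_nonneg M) hM0
  -- minimal mass of f³ over windows of length ε'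
  have hint3 : ∀ u v : ℝ, IntervalIntegrable (fun s => f s ^ 3) volume u v :=
    fun u v => (hfc.pow 3).intervalIntegrable u v
  set F : ℝ → ℝ := fun a2 => ∫ s in a2..(a2 + ε'), f s ^ 3 with hF
  have hFcont : Continuous F := by
    have hG : Continuous fun b2 => ∫ s in (0 : ℝ)..b2, f s ^ 3 :=
      intervalIntegral.continuous_primitive hint3 0
    have hFeq : F = fun a2 => (∫ s in (0 : ℝ)..(a2 + ε'), f s ^ 3) -
        ∫ s in (0 : ℝ)..a2, f s ^ 3 := by
      funext a2
      have h := intervalIntegral.integral_add_adjacent_intervals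
        (hint3 0 a2) (hint3 a2 (a2 + ε'))
      simp only [hF]
      linarith
    rw [hFeq]
    exact (hG.comp (continuous_id.add continuous_const)).sub hG
  have hFper : Function.Periodic F ℓ := by
    intro x
    have h1 : (∫ s in x..(x + ε'), f (s + ℓ) ^ 3) = ∫ s in (x + ℓ)..(x + ε' + ℓ), f s ^ 3 :=
      intervalIntegral.integral_comp_add_right (fun s => f s ^ 3) ℓ
    have h2 : (∫ s in x..(x + ε'), f (s + ℓ) ^ 3) = ∫ s in x..(x + ε'), f s ^ 3 :=
      intervalIntegral.integral_congr fun s _ => by rw [hfper s]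
    simp only [hF]
    rw [show x + ℓ + ε' = x + ε' + ℓ by ring, ← h1, h2]
  obtain ⟨a₀, ha₀, hmin⟩ :=
    isCompact_Icc.exists_isMinOn (Set.nonempty_Icc.mpr hℓ.le)
      (hFcont.continuousOn (s := Set.Icc 0 ℓ))
  set m : ℝ := F a₀ with hmdef
  have hm0 : 0 < m := by
    have := interval_pos f hfc hf0 hfpos (show a₀ < a₀ + ε' by linarith)
    simpa [hmdef, hF] using this
  have hmF : ∀ a2, m ≤ F a2 := by
    intro a2
    obtain ⟨y, hy, hyeq⟩ := hFper.exists_mem_Ico₀ hℓ a2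
    rw [hyeq]
    exact hmin ⟨hy.1, hy.2.le⟩
  -- the smallness parameter κ
  have h1δ : 0 < 1 - δ := by linarith
  have hden : 0 < ℓ * (M ^ 2 + M) + 1 := by
    have h := mul_nonneg hℓ.le hMM; linarith only [h]
  have hnum : 0 < 1 / 2 * (1 - δ) * m :=
    mul_pos (mul_pos (by norm_num : (0:ℝ) < 1 / 2) h1δ) hm0
  set κ : ℝ := min 1 (1 / 2 * (1 - δ) * m / (ℓ * (M ^ 2 + M) + 1)) with hκdef
  have hκ0 : 0 < κ := lt_min one_pos (div_pos hnum hden)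
  have hκ1 : κ ≤ 1 := min_le_left _ _
  obtain ⟨ε₁, hε₁0, huc⟩ := periodic_uc f hfc hℓ hfper hκ0
  refine ⟨ε₁, hε₁0, ?_⟩
  intro ε hε hεε₁ a b hab1 hab2
  obtain ⟨hgc, hgclose⟩ := mollify_props f η hfc hηsm.continuous hηsupp hη0 hη1 hε hκ0.le
    (fun s y hy => huc s y (hy.trans hεε₁))
  set g : ℝ → ℝ := mollify f η ε with hg
  have hab : a < b := by linarith only [hab1, hε'0]
  -- lower bound on ∫ f³
  have hintf3ab : m ≤ ∫ s in a..b, f s ^ 3 := by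
    have hsplit : (∫ s in a..b, f s ^ 3)
        = (∫ s in a..(a + ε'), f s ^ 3) + ∫ s in (a + ε')..b, f s ^ 3 :=
      (intervalIntegral.integral_add_adjacent_intervals (hint3 a (a + ε'))
        (hint3 (a + ε') b)).symm
    have h2 : 0 ≤ ∫ s in (a + ε')..b, f s ^ 3 :=
      intervalIntegral.integral_nonneg (by linarith) (fun u _ => pow_nonneg (hf0 u) 3)
    have h3 := hmF a
    simp only [hF] at h3
    rw [hsplit]
    linarith only [h2, h3]
  -- the error term
  have hψbound : ∀ x : ℝ,
      |(1 - 2 * δ) * f x ^ 2 * (g x - f x) - δ * f x * (g x - f x) ^ 2| ≤ (M ^ 2 + M) * κ := by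
    intro x
    have he := hgclose x
    have hfx0 := hf0 x
    have hfxM := hM x
    have h12 : |1 - 2 * δ| ≤ 1 :=
      abs_le.mpr ⟨by linarith only [hδ1], by linarith only [hδ0]⟩
    have hfsq : |f x ^ 2| ≤ M ^ 2 := by
      rw [abs_of_nonneg (sq_nonneg _)]
      exact pow_le_pow_left₀ hfx0 hfxM 2
    have hfabs : |f x| ≤ M := by rw [abs_of_nonneg hfx0]; exact hfxM
    have hδabs : |δ| ≤ 1 := abs_le.mpr ⟨by linarith only [hδ0], by linarith only [hδ1]⟩
    have hesq : |(g x - f x) ^ 2| ≤ κ := by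
      rw [abs_of_nonneg (sq_nonneg _), ← sq_abs, sq]
      calc |g x - f x| * |g x - f x| ≤ κ * κ :=
            mul_le_mul he he (abs_nonneg _) hκ0.le
        _ ≤ 1 * κ := mul_le_mul_of_nonneg_right hκ1 hκ0.le
        _ = κ := one_mul κ
    have h7 : |(1 - 2 * δ) * f x ^ 2 * (g x - f x)| ≤ M ^ 2 * κ := by
      rw [abs_mul, abs_mul]
      calc |1 - 2 * δ| * |f x ^ 2| * |g x - f x| ≤ 1 * M ^ 2 * κ := by
            apply mul_le_mul (mul_le_mul h12 hfsq (abs_nonneg _) zero_le_one)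
              he (abs_nonneg _) (by nlinarith [sq_nonneg M])
        _ = M ^ 2 * κ := by ring
    have h8 : |δ * f x * (g x - f x) ^ 2| ≤ M * κ := by
      rw [abs_mul, abs_mul]
      calc |δ| * |f x| * |(g x - f x) ^ 2| ≤ 1 * M * κ := by
            apply mul_le_mul (mul_le_mul hδabs hfabs (abs_nonneg _) zero_le_one)
              hesq (abs_nonneg _) (by linarith only [hM0])
        _ = M * κ := by ring
    calc |(1 - 2 * δ) * f x ^ 2 * (g x - f x) - δ * f x * (g x - f x) ^ 2|
        ≤ |(1 - 2 * δ) * f x ^ 2 * (g x - f x)| + |δ * f x * (g x - f x) ^ 2| := abs_sub _ _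
      _ ≤ M ^ 2 * κ + M * κ := add_le_add h7 h8
      _ = (M ^ 2 + M) * κ := by ring
  have hψ : |∫ s in a..b, ((1 - 2 * δ) * f s ^ 2 * (g s - f s) - δ * f s * (g s - f s) ^ 2)|
      ≤ (M ^ 2 + M) * κ * (b - a) := by
    have h := intervalIntegral.norm_integral_le_of_norm_le_const
      (C := (M ^ 2 + M) * κ) (a := a) (b := b)
      (f := fun s => (1 - 2 * δ) * f s ^ 2 * (g s - f s) - δ * f s * (g s - f s) ^ 2)
      (fun x _ => by rw [Real.norm_eq_abs]; exact hψbound x)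
    rw [Real.norm_eq_abs, abs_of_nonneg (by linarith : (0 : ℝ) ≤ b - a)] at h
    exact h
  -- integrability of the pieces
  have hce : Continuous fun s => (1 - 2 * δ) * f s ^ 2 * (g s - f s)
      - δ * f s * (g s - f s) ^ 2 :=
    ((continuous_const.mul (hfc.pow 2)).mul (hgc.sub hfc)).sub
      ((continuous_const.mul hfc).mul ((hgc.sub hfc).pow 2))
  have hsum : (∫ s in a..b, g s * f s * (f s - δ * g s))
      = (1 - δ) * (∫ s in a..b, f s ^ 3)
        + ∫ s in a..b, ((1 - 2 * δ) * f s ^ 2 * (g s - f s) - δ * f s * (g s - f s) ^ 2) := by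
    rw [← intervalIntegral.integral_const_mul,
      ← intervalIntegral.integral_add (f := fun s => (1 - δ) * f s ^ 3)
        ((continuous_const.mul (hfc.pow 3)).intervalIntegrable a b)
        (hce.intervalIntegrable a b)]
    exact intervalIntegral.integral_congr fun s _ => by ring
  -- the core inequality
  have hcore : (1 / 2) * (1 - δ) * (∫ s in a..b, f s ^ 3)
      ≤ ∫ s in a..b, g s * f s * (f s - δ * g s) := by
    rw [hsum]
    have h1 : (M ^ 2 + M) * κ * (b - a) ≤ (M ^ 2 + M) * κ * ℓ := by
      exact mul_le_mul_of_nonneg_left hab2 (mul_nonneg hMM hκ0.le)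
    have hκle : κ ≤ 1 / 2 * (1 - δ) * m / (ℓ * (M ^ 2 + M) + 1) := min_le_right _ _
    have h2 : (M ^ 2 + M) * κ * ℓ ≤ 1 / 2 * (1 - δ) * m := by
      calc (M ^ 2 + M) * κ * ℓ ≤ (ℓ * (M ^ 2 + M) + 1) * κ := by linarith only [hκ0]
        _ ≤ (ℓ * (M ^ 2 + M) + 1) * (1 / 2 * (1 - δ) * m / (ℓ * (M ^ 2 + M) + 1)) :=
            mul_le_mul_of_nonneg_left hκle hden.le
        _ = 1 / 2 * (1 - δ) * m := by field_simp
    have h3 := (abs_le.mp hψ).1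
    have h4 : 1 / 2 * (1 - δ) * m ≤ 1 / 2 * (1 - δ) * ∫ s in a..b, f s ^ 3 :=
      mul_le_mul_of_nonneg_left hintf3ab (by linarith only [h1δ])
    linarith only [h1, h2, h3, h4]
  -- conclude
  have hrw : (∫ s in a..b,
      (δ * dissipC N * g s) * f s * (dissipC N * f s - δ * dissipC N * g s))
      = δ * dissipC N ^ 2 * ∫ s in a..b, g s * f s * (f s - δ * g s) := by
    rw [← intervalIntegral.integral_const_mul]
    exact intervalIntegral.integral_congr fun s _ => by ring
  rw [hrw]
  have hfin := mul_le_mul_of_nonneg_left hcore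
    (mul_nonneg (mul_nonneg hδ0.le hA) (sq_nonneg (dissipC N)))
  calc (1 / 2) * δ * (1 - δ) * dissipA N * dissipC N ^ 2 * (∫ s in a..b, f s ^ 3)
      = δ * dissipA N * dissipC N ^ 2 * ((1 / 2) * (1 - δ) * ∫ s in a..b, f s ^ 3) := by ring
    _ ≤ δ * dissipA N * dissipC N ^ 2 * ∫ s in a..b, g s * f s * (f s - δ * g s) := hfin
    _ = dissipA N * (δ * dissipC N ^ 2 * ∫ s in a..b, g s * f s * (f s - δ * g s)) := by ring
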